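/- arXiv:1111.3182 — 5 statements merged into one kernel-verified Lean document; each statement's English description precedes it below -/
import Mathlib

section
/- Let N ≥ 2 and n ≥ 1. Define the switch prior on index sequences i : Fin n → Fin N by w(i) = (1/N) * ∏_{t=2}^{n} [α_t/(N-1) if i_t ≠ i_{t-1}, else (1-α_t)], with switch rate α_t = 1/t. If m(i) = #{t ∈ [2,n] : i_t ≠ i_{t-1}} is the number of switches, then -log₂ w(i) ≤ (m(i)+1) * (log₂ N + log₂ n). -/
/-!
At a switch the factor `1/(t (N-1))` of the prior is at least `(1 - 1/t) / (N n)`, since `t ≤ n`;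
elsewhere it is exactly `1 - 1/t`. The factors `1 - 1/t` telescope to `1/n`, so
`w(i) ≥ (1/N) (1/n) (1/(N n))^m = (1/(N n))^(m+1)`, and taking `-log₂` gives the bound.
-/

open Finset

/-- The switch prior on index sequences `i` (positions 1..n, values in `Fin N`),
with switch rate `α_t = 1/t`:
`w(i) = (1/N) * ∏_{t=2}^{n} [ (1/t)/(N-1) if i_t ≠ i_{t-1}, else 1 - 1/t ]`. -/
noncomputable def switchPrior (N n : ℕ) (i : ℕ → Fin N) : ℝ :=
  (1 / (N : ℝ)) *
    ∏ t ∈ Finset.Icc 2 n,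
      (if i t = i (t - 1) then 1 - 1 / (t : ℝ) else (1 / (t : ℝ)) / ((N : ℝ) - 1))

/-- The number of switches `m(i) = #{t ∈ [2,n] : i_t ≠ i_{t-1}}`. -/
def numSwitches (N n : ℕ) (i : ℕ → Fin N) : ℕ :=
  ((Finset.Icc 2 n).filter fun t => i t ≠ i (t - 1)).card

theorem prod_Icc_two_one_sub_inv {n : ℕ} (hn : 1 ≤ n) :
    ∏ t ∈ Icc 2 n, (1 - 1 / (t : ℝ)) = 1 / n := by
  induction n, hn using Nat.le_induction with
  | base => simp
  | succ k hk ih =>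
    rw [← insert_Icc_right_eq_Icc_add_one (by omega), prod_insert (by simp), ih]
    have hk0 : (k : ℝ) ≠ 0 := by positivity
    field_simp
    push_cast
    ring

theorem one_sub_inv_div_le_inv_div_sub_one {N t n : ℝ} (hN : 1 < N) (ht : 0 < t) (htn : t ≤ n) :
    (1 - 1 / t) / (N * n) ≤ 1 / t / (N - 1) := by
  have hn : 0 < n := ht.trans_le htn
  calc (1 - 1 / t) / (N * n) ≤ 1 / (N * n) := by gcongr; linarith [one_div_pos.2 ht]
    _ ≤ 1 / (N * t) := by gcongr
    _ = 1 / t / N := by ring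
    _ ≤ 1 / t / (N - 1) := by gcongr; linarith

theorem one_sub_inv_mul_le_switchPrior_factor {N n t : ℕ} (hN : 2 ≤ N) (i : ℕ → Fin N)
    (ht : t ∈ Icc 2 n) :
    (1 - 1 / (t : ℝ)) * (if i t ≠ i (t - 1) then ((N : ℝ) * n)⁻¹ else 1) ≤
      if i t = i (t - 1) then 1 - 1 / (t : ℝ) else 1 / (t : ℝ) / ((N : ℝ) - 1) := by
  obtain ⟨ht2, htn⟩ := mem_Icc.1 ht
  by_cases h : i t = i (t - 1)
  · simp [h]
  · simp only [h, ne_eq, not_false_eq_true, if_true, if_false, ← div_eq_mul_inv]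
    exact one_sub_inv_div_le_inv_div_sub_one (by exact_mod_cast hN) (by positivity)
      (by exact_mod_cast htn)

theorem inv_mul_pow_numSwitches_succ_le_switchPrior {N n : ℕ} (hN : 2 ≤ N) (hn : 1 ≤ n)
    (i : ℕ → Fin N) :
    ((N : ℝ) * n)⁻¹ ^ (numSwitches N n i + 1) ≤ switchPrior N n i := by
  set c : ℝ := ((N : ℝ) * n)⁻¹
  have hpow : ∏ t ∈ Icc 2 n, (if i t ≠ i (t - 1) then c else 1) = c ^ numSwitches N n i := by
    rw [prod_ite, prod_const_one, prod_const, mul_one, numSwitches]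
  have hfactors : 1 / (n : ℝ) * c ^ numSwitches N n i ≤
      ∏ t ∈ Icc 2 n,
        (if i t = i (t - 1) then 1 - 1 / (t : ℝ) else 1 / (t : ℝ) / ((N : ℝ) - 1)) := by
    rw [← prod_Icc_two_one_sub_inv hn, ← hpow, ← prod_mul_distrib]
    refine prod_le_prod (fun t ht => ?_) (fun t ht => one_sub_inv_mul_le_switchPrior_factor hN i ht)
    have ht : (2 : ℝ) ≤ t := by exact_mod_cast (mem_Icc.1 ht).1
    have : 1 / (t : ℝ) ≤ 1 := by rw [div_le_one (by positivity)]; linarith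
    have : 0 ≤ 1 - 1 / (t : ℝ) := by linarith
    split_ifs <;> positivity
  calc c ^ (numSwitches N n i + 1) = 1 / N * (1 / n * c ^ numSwitches N n i) := by
        rw [pow_succ]; ring
    _ ≤ switchPrior N n i := by rw [switchPrior]; gcongr

/-- If `N ≥ 2`, `n ≥ 1`, then `-log₂ w(i) ≤ (m(i)+1) * (log₂ N + log₂ n)`. -/
theorem switch_prior_bound (N n : ℕ) (hN : 2 ≤ N) (hn : 1 ≤ n) (i : ℕ → Fin N) :
    -Real.logb 2 (switchPrior N n i) ≤
      ((numSwitches N n i : ℝ) + 1) * (Real.logb 2 N + Real.logb 2 n) := by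
  have hlog := Real.logb_le_logb_of_le one_lt_two (by positivity)
    (inv_mul_pow_numSwitches_succ_le_switchPrior hN hn i)
  rw [Real.logb_pow, Real.logb_inv, Real.logb_mul (by positivity) (by positivity)] at hlog
  push_cast at hlog
  linarith
end

section
/- With the switch prior w as above (N ≥ 2, α_t = 1/t) and any index sequence with m switches, w(i_{1:n}) ≥ (1/N) * n^{-m} * (N-1)^{-m} * (n-m)^{-1}. -/
open Finset

noncomputable def switchBound (N n m : ℕ) : ℝ :=
  1 / (N : ℝ) * ((n : ℝ) ^ m)⁻¹ * (((N : ℝ) - 1) ^ m)⁻¹ * ((n : ℝ) - m)⁻¹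

lemma switchPrior_succ {N n : ℕ} (hn : 1 ≤ n) (i : ℕ → Fin N) :
    switchPrior N (n + 1) i = switchPrior N n i *
      if i (n + 1) = i n then 1 - 1 / ((n : ℝ) + 1) else 1 / ((n : ℝ) + 1) / ((N : ℝ) - 1) := by
  rw [switchPrior, ← insert_Icc_right_eq_Icc_add_one (by omega : 2 ≤ n + 1),
    prod_insert (by simp), switchPrior, Nat.add_sub_cancel]
  push_cast
  ring

lemma numSwitches_succ {N n : ℕ} (hn : 1 ≤ n) (i : ℕ → Fin N) :
    numSwitches N (n + 1) i = numSwitches N n i + if i (n + 1) = i n then 0 else 1 := by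
  rw [numSwitches, ← insert_Icc_right_eq_Icc_add_one (by omega : 2 ≤ n + 1), filter_insert,
    Nat.add_sub_cancel, numSwitches]
  by_cases h : i (n + 1) = i n
  · simp [h]
  · rw [if_pos h, if_neg h, card_insert_of_notMem (by simp)]

lemma numSwitches_lt {N n : ℕ} (hn : 1 ≤ n) (i : ℕ → Fin N) : numSwitches N n i < n :=
  (card_filter_le _ _).trans_lt (by simp; omega)

lemma switchBound_succ_le_stay {N n m : ℕ} (hN : 1 ≤ N) (hm : m < n) :
    switchBound N (n + 1) m ≤ switchBound N n m * (1 - 1 / ((n : ℝ) + 1)) := by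
  have hN' : (1 : ℝ) ≤ N := by exact_mod_cast hN
  have hm' : (m : ℝ) + 1 ≤ n := by exact_mod_cast hm
  have hc : (0 : ℝ) ≤ 1 / (N : ℝ) * (((N : ℝ) - 1) ^ m)⁻¹ := by
    have : (0 : ℝ) ≤ N - 1 := by linarith
    positivity
  have hn : (0 : ℝ) < n := by linarith
  have hnm : (0 : ℝ) < n - m := by linarith
  unfold switchBound
  push_cast
  calc _ = 1 / (N : ℝ) * (((N : ℝ) - 1) ^ m)⁻¹ * (((n : ℝ) + 1) ^ m * (n + 1 - m))⁻¹ := by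
        rw [mul_inv]; ring
    _ ≤ 1 / (N : ℝ) * (((N : ℝ) - 1) ^ m)⁻¹ * ((n : ℝ) ^ m * ((n - m) * (n + 1) / n))⁻¹ := by
      have : 0 < (n : ℝ) ^ m * ((n - m) * (n + 1) / n) := by positivity
      gcongr
      · linarith
      · rw [div_le_iff₀ hn]
        nlinarith
    _ = _ := by
      field_simp
      ring

lemma switchBound_succ_succ_le_switch {N n m : ℕ} (hN : 1 ≤ N) (hm : m < n) :
    switchBound N (n + 1) (m + 1) ≤ switchBound N n m * (1 / ((n : ℝ) + 1) / ((N : ℝ) - 1)) := by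
  have hN' : (1 : ℝ) ≤ N := by exact_mod_cast hN
  have hm' : (m : ℝ) + 1 ≤ n := by exact_mod_cast hm
  have hc : (0 : ℝ) ≤ 1 / (N : ℝ) * (((N : ℝ) - 1) ^ (m + 1))⁻¹ * ((n : ℝ) - m)⁻¹ := by
    have : (0 : ℝ) ≤ N - 1 := by linarith
    have : (0 : ℝ) ≤ n - m := by linarith
    positivity
  unfold switchBound
  push_cast
  calc _ = 1 / (N : ℝ) * (((N : ℝ) - 1) ^ (m + 1))⁻¹ * ((n : ℝ) - m)⁻¹ * (((n : ℝ) + 1) ^ m)⁻¹ *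
        ((n : ℝ) + 1)⁻¹ := by
        rw [pow_succ ((n : ℝ) + 1), mul_inv]; ring
    _ ≤ 1 / (N : ℝ) * (((N : ℝ) - 1) ^ (m + 1))⁻¹ * ((n : ℝ) - m)⁻¹ * ((n : ℝ) ^ m)⁻¹ *
        ((n : ℝ) + 1)⁻¹ := by
      have : (0 : ℝ) < n := by linarith
      gcongr
      linarith
    _ = _ := by rw [pow_succ, mul_inv]; ring

lemma switchBound_numSwitches_le_switchPrior {N n : ℕ} (hn : 1 ≤ n) (i : ℕ → Fin N) :
    switchBound N n (numSwitches N n i) ≤ switchPrior N n i := by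
  have hN : 1 ≤ N := (i 0).pos
  induction n, hn using Nat.le_induction with
  | base => simp [switchBound, switchPrior, numSwitches]
  | succ n hn ih =>
    have hm := numSwitches_lt hn i
    rw [switchPrior_succ hn, numSwitches_succ hn]
    have hN' : (1 : ℝ) ≤ N := by exact_mod_cast hN
    split_ifs
    · calc _ ≤ switchBound N n (numSwitches N n i) * (1 - 1 / ((n : ℝ) + 1)) :=
            switchBound_succ_le_stay hN hm
        _ ≤ _ := by
          gcongr
          rw [sub_nonneg, div_le_one (by positivity)]
          linarith
    · calc _ ≤ switchBound N n (numSwitches N n i) * (1 / ((n : ℝ) + 1) / ((N : ℝ) - 1)) :=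
            switchBound_succ_succ_le_switch hN hm
        _ ≤ _ := by
          have : (0 : ℝ) ≤ N - 1 := by linarith
          gcongr

theorem switch_prior_lower_bound_general (N n : ℕ) (hn : 1 ≤ n) (i : ℕ → Fin N) :
    (1 / (N : ℝ)) * ((n : ℝ) ^ (numSwitches N n i))⁻¹ *
        (((N : ℝ) - 1) ^ (numSwitches N n i))⁻¹ * ((n : ℝ) - numSwitches N n i)⁻¹ ≤
      switchPrior N n i :=
  switchBound_numSwitches_le_switchPrior hn i

/-- Intermediate bound: `w(i_{1:n}) ≥ (1/N) * n^{-m} * (N-1)^{-m} * (n-m)^{-1}`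
where `m` is the number of switches. -/
theorem switch_prior_lower_bound (N n : ℕ) (hN : 2 ≤ N) (hn : 1 ≤ n) (i : ℕ → Fin N) :
    (1 / (N : ℝ)) * ((n : ℝ) ^ (numSwitches N n i))⁻¹ *
        (((N : ℝ) - 1) ^ (numSwitches N n i))⁻¹ * ((n : ℝ) - numSwitches N n i)⁻¹ ≤
      switchPrior N n i :=
  switch_prior_lower_bound_general N n hn i
end

section
/- Fix the switch distribution setup with N models and switch prior w. If w_{j,t} := Σ_{i_{<t}} w(i_{<t} j) ∏_{k=1}^{t-1} ρ_{i_k}(x_k|x_{<k}), then the weights satisfy the recursion w_{j,t+1} = (1/(N-1)) [ α_{t+1} r_t + (N(1-α_{t+1}) - 1) w_{j,t} ρ_j(x_t|x_{<t}) ], where r_t = Σ_{j=1}^N w_{j,t} ρ_j(x_t|x_{<t}). -/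
/-- The switch prior on a reversed index sequence (most recent index first):
`w(ε)=1`, `w(j)=1/N`, and appending index `a` at time `t` after `b` multiplies by
`(1-α_t)` if `a = b` and by `α_t/(N-1)` otherwise. -/
noncomputable def swPriorRev (N : ℕ) (α : ℕ → ℝ) : List (Fin N) → ℝ
  | [] => 1
  | [_] => 1 / (N : ℝ)
  | a :: b :: rest =>
      (if a = b then 1 - α (rest.length + 2) else α (rest.length + 2) / ((N : ℝ) - 1)) *
        swPriorRev N α (b :: rest)

/-- The likelihood `∏_{k=1}^{t} ρ_{i_k}(x_k|x_{<k})` of a reversed index sequence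
`[i_t, …, i_1]`, where `p j k` denotes `ρ_j(x_k|x_{<k})`. -/
def lik (N : ℕ) (p : Fin N → ℕ → ℝ) : List (Fin N) → ℝ
  | [] => 1
  | a :: rest => p a (rest.length + 1) * lik N p rest

/-- `w_{j,t} = Σ_{i_{<t}} w(i_{<t} j) ∏_{k=1}^{t-1} ρ_{i_k}(x_k|x_{<k})`. -/
noncomputable def wjt (N : ℕ) (α : ℕ → ℝ) (p : Fin N → ℕ → ℝ) (j : Fin N) (t : ℕ) : ℝ :=
  ∑ i : Fin (t - 1) → Fin N,
    swPriorRev N α (j :: (List.ofFn i).reverse) * lik N p (List.ofFn i).reverse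

/-!
Splitting off the most recent index `a = i_t` of `i_{<t+1}`, the prior factors as
`w(i_{<t} a j) = c(j, a) · w(i_{<t} a)` with `c(j, a) = 1 - α_{t+1}` if `j = a` and
`α_{t+1}/(N-1)` otherwise, and the likelihood gains the factor `ρ_a(x_t|x_{<t})`. Hence
`w_{j,t+1} = Σ_a c(j, a) w_{a,t} ρ_a(x_t|x_{<t})`; writing `c(j, a)` as the constant
`α_{t+1}/(N-1)` plus a correction on the diagonal gives the recursion.
-/

open Finset

theorem Fin.sum_univ_fun_succ_eq_sum_snoc {β M : Type*} [Fintype β] [AddCommMonoid M] {n : ℕ}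
    (g : (Fin (n + 1) → β) → M) :
    ∑ i : Fin (n + 1) → β, g i = ∑ a : β, ∑ i : Fin n → β, g (Fin.snoc i a) := by
  rw [← (Fin.snocEquiv fun _ => β).sum_comp g, Fintype.sum_prod_type]
  rfl

theorem List.reverse_ofFn_snoc {β : Type*} {n : ℕ} (i : Fin n → β) (a : β) :
    (List.ofFn (Fin.snoc i a : Fin (n + 1) → β)).reverse = a :: (List.ofFn i).reverse := by
  rw [List.ofFn_succ_last]
  simp

theorem sum_ite_diag_mul {ι : Type*} [Fintype ι] [DecidableEq ι] {n : ℝ} (hn : n - 1 ≠ 0)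
    (β : ℝ) (v : ι → ℝ) (j : ι) :
    ∑ a, (if j = a then 1 - β else β / (n - 1)) * v a =
      1 / (n - 1) * (β * ∑ a, v a + (n * (1 - β) - 1) * v j) := by
  have hcoeff : ∀ a, (if j = a then 1 - β else β / (n - 1)) * v a =
      β / (n - 1) * v a + if j = a then (1 - β - β / (n - 1)) * v j else 0 := by
    intro a
    split_ifs with h
    · subst h; ring
    · ring
  rw [sum_congr rfl fun a _ => hcoeff a, sum_add_distrib, ← mul_sum, sum_ite_eq,
    if_pos (mem_univ j)]
  field_simp
  ring

theorem wjt_succ_eq_sum {N : ℕ} (α : ℕ → ℝ) (p : Fin N → ℕ → ℝ) {t : ℕ} (ht : 1 ≤ t)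
    (j : Fin N) :
    wjt N α p j (t + 1) =
      ∑ a, (if j = a then 1 - α (t + 1) else α (t + 1) / ((N : ℝ) - 1)) *
        (wjt N α p a t * p a t) := by
  obtain ⟨s, rfl⟩ : ∃ s, t = s + 1 := ⟨t - 1, by omega⟩
  rw [wjt, Nat.add_sub_cancel, Fin.sum_univ_fun_succ_eq_sum_snoc]
  refine sum_congr rfl fun a _ => ?_
  rw [wjt, Nat.add_sub_cancel, sum_mul, mul_sum]
  refine sum_congr rfl fun i _ => ?_
  simp only [List.reverse_ofFn_snoc, swPriorRev, lik, List.length_reverse, List.length_ofFn]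
  ring

theorem wjt_recursion_general (N : ℕ) (hN : 2 ≤ N) (α : ℕ → ℝ)
    (p : Fin N → ℕ → ℝ) (t : ℕ) (ht : 1 ≤ t) (j : Fin N) :
    wjt N α p j (t + 1) =
      (1 / ((N : ℝ) - 1)) *
        (α (t + 1) * (∑ j' : Fin N, wjt N α p j' t * p j' t) +
          ((N : ℝ) * (1 - α (t + 1)) - 1) * wjt N α p j t * p j t) := by
  have hN1 : (N : ℝ) - 1 ≠ 0 := by
    have : (2 : ℝ) ≤ N := by exact_mod_cast hN
    linarith
  rw [wjt_succ_eq_sum α p ht, sum_ite_diag_mul hN1, mul_assoc _ (wjt N α p j t)]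

/-- Weight-decomposition recursion: with `r_t = Σ_j w_{j,t} ρ_j(x_t|x_{<t})`,
`w_{j,t+1} = (1/(N-1)) [ α_{t+1} r_t + (N(1-α_{t+1}) - 1) w_{j,t} ρ_j(x_t|x_{<t}) ]`. -/
theorem wjt_recursion (N : ℕ) (hN : 2 ≤ N) (α : ℕ → ℝ)
    (hα : ∀ k, 0 ≤ α k ∧ α k ≤ 1) (p : Fin N → ℕ → ℝ) (t : ℕ) (ht : 1 ≤ t) (j : Fin N) :
    wjt N α p j (t + 1) =
      (1 / ((N : ℝ) - 1)) *
        (α (t + 1) * (∑ j' : Fin N, wjt N α p j' t * p j' t) +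
          ((N : ℝ) * (1 - α (t + 1)) - 1) * wjt N α p j t * p j t) :=
  wjt_recursion_general N hN α p t ht j
end

section
/- With notation as in the weight-decomposition lemma, Σ_{j=1}^N w_{j,t} ρ_j(x_t|x_{<t}) = τ_α(x_{1:t}), i.e., Algorithm 1 computes the switch distribution. -/
noncomputable def tau (N : ℕ) (α : ℕ → ℝ) (p : Fin N → ℕ → ℝ) (t : ℕ) : ℝ :=
  ∑ i : Fin t → Fin N,
    swPriorRev N α (List.ofFn i).reverse * lik N p (List.ofFn i).reverse

/-- Correctness of Algorithm 1: `Σ_{j=1}^N w_{j,t} ρ_j(x_t|x_{<t}) = τ_α(x_{1:t})`. -/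
theorem algorithm_computes_tau (N : ℕ) (hN : 2 ≤ N) (α : ℕ → ℝ)
    (hα : ∀ k, 0 ≤ α k ∧ α k ≤ 1) (p : Fin N → ℕ → ℝ) (t : ℕ) (ht : 1 ≤ t) :
    ∑ j : Fin N, wjt N α p j t * p j t = tau N α p t := by
  obtain ⟨n, rfl⟩ : ∃ n, t = n + 1 := ⟨t - 1, by omega⟩
  unfold tau wjt
  show (∑ j : Fin N, (∑ i : Fin n → Fin N,
    swPriorRev N α (j :: (List.ofFn i).reverse) * lik N p (List.ofFn i).reverse) * p j (n+1)) = _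
  rw [← Equiv.sum_comp (Fin.snocEquiv (fun _ => Fin N))]
  rw [Fintype.sum_prod_type]
  simp only [Finset.sum_mul]
  refine Finset.sum_congr rfl fun j _ => Finset.sum_congr rfl fun f _ => ?_
  have h1 : List.ofFn (Fin.snocEquiv (fun _ => Fin N) (j, f)) =
      (List.ofFn f).concat j := by
    rw [List.ofFn_succ']
    simp only [Fin.snocEquiv, Equiv.coe_fn_mk, Fin.snoc_castSucc, Fin.snoc_last]
  rw [h1, List.concat_eq_append, List.reverse_concat']
  have h2 : lik N p (j :: (List.ofFn f).reverse) =
      p j (n + 1) * lik N p (List.ofFn f).reverse := by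
    simp [lik]
  rw [h2]
  ring
end

section
/- For all n ≥ 1, all binary sequences x_{1:n} with a zeroes and b ones, and all θ ∈ [0,1]: log₂( θ^b (1-θ)^a / ξ_KT(x_{1:n}) ) ≤ (1/2)·log₂ n + 1. -/
open MeasureTheory

/-- The Krichevsky–Trofimov estimator: the Beta(1/2,1/2) mixture of Bernoulli
likelihoods, where `b` and `a` count the ones and zeroes of `x`. -/
noncomputable def ktXi (x : List Bool) : ℝ :=
  ∫ θ in (0:ℝ)..1,
    θ ^ (x.count true) * (1 - θ) ^ (x.count false) *
      (Real.pi⁻¹ * θ ^ (-(1/2) : ℝ) * (1 - θ) ^ (-(1/2) : ℝ))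

/-! Evaluating the Beta integral gives `ξ_KT(x) = B(b + 1/2, a + 1/2) / π =: P(b, a)`, and the
likelihood `θ^b (1-θ)^a` is largest at `θ = b / n`, so it suffices that
`b^b a^a ≤ 2 √n n^n P(b, a)`. This goes by induction on `n = a + b`, with equality at `n = 1`:
raising `b` by one multiplies `P` by `(b + 1/2) / (n + 1)`, the left side by at most
`e (b + 1/2)` and `2 √n n^n` by at least `e (n + 1)`, because `(b+1)^(b+1) ≤ e (b + 1/2) b^b`
and `e ≤ (1 + 1/n)^(n + 1/2)`. Both estimates come from the series
`log (1 + 1/x) = 2 ∑ s^(2k+1) / (2k+1)`, `s = 1 / (2x + 1)`, which gives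
`1 ≤ (x + 1/2) log (1 + 1/x) ≤ 1 + 1 / (12 x (x + 1))`. -/

open Real ProbabilityTheory

theorem Real.one_le_add_half_mul_log_one_add_inv {x : ℝ} (hx : 0 < x) :
    1 ≤ (x + 1 / 2) * log (1 + x⁻¹) := by
  have hfirst : 2 / (2 * x + 1) ≤ log (1 + x⁻¹) := by
    simpa [div_eq_mul_inv] using
      le_hasSum (Real.hasSum_log_one_add_inv hx) 0 fun k _ => by positivity
  calc (1 : ℝ) = (x + 1 / 2) * (2 / (2 * x + 1)) := by field_simp
    _ ≤ _ := by gcongr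

theorem Real.add_half_mul_log_one_add_inv_le {x : ℝ} (hx : 0 < x) :
    (x + 1 / 2) * log (1 + x⁻¹) ≤ 1 + 1 / (12 * x * (x + 1)) := by
  set s : ℝ := 1 / (2 * x + 1) with hs
  have hs1 : s ^ 2 < 1 := by
    rw [hs, div_pow, div_lt_one (by positivity)]; nlinarith
  -- the tail of the series beyond `2 s` is dominated by `(2/3) s³ ∑ s^(2k)`
  have htail := (hasSum_nat_add_iff' 1).mpr (Real.hasSum_log_one_add_inv hx)
  have hgeom := (hasSum_geometric_of_lt_one (by positivity) hs1).mul_left (2 / 3 * s ^ 3)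
  have hle := hasSum_le (fun k => ?_) htail hgeom
  · have h1 : 1 - s ^ 2 = 4 * x * (x + 1) / (2 * x + 1) ^ 2 := by rw [hs]; field_simp; ring
    have hgeom_eq : 2 / 3 * s ^ 3 * (1 - s ^ 2)⁻¹ = 1 / (6 * x * (x + 1) * (2 * x + 1)) := by
      rw [h1, hs]; field_simp; ring
    simp only [Finset.sum_range_one, Nat.cast_zero, mul_zero, zero_add, pow_one, hgeom_eq,
      div_one, mul_one, ← hs] at hle
    calc (x + 1 / 2) * log (1 + x⁻¹)
        ≤ (x + 1 / 2) * (2 * s + 1 / (6 * x * (x + 1) * (2 * x + 1))) := by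
          gcongr; linarith
      _ = 1 + 1 / (12 * x * (x + 1)) := by rw [hs]; field_simp; ring
  · rw [← hs]
    push_cast
    rw [show 2 * (k + 1) + 1 = 3 + 2 * k by ring, pow_add, pow_mul, ← mul_assoc]
    gcongr
    rw [mul_one_div]
    gcongr
    linarith [k.cast_nonneg (α := ℝ)]

theorem Real.add_one_mul_log_add_one_le {x : ℝ} (hx : 1 / 2 ≤ x) :
    (x + 1) * log (x + 1) ≤ 1 + log (x + 1 / 2) + x * log x := by
  have hx0 : 0 < x := by linarith
  -- `(x+1) log (x+1) - x log x - log (x + 1/2) = (x + 1/2) log (1 + 1/x) - log (1 + 1/y) / 2`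
  set y := 4 * x * (x + 1) with hy
  have hy0 : 0 < y := by positivity
  have hL : log (1 + x⁻¹) = log (x + 1) - log x := by
    rw [← log_div (by positivity) hx0.ne']; congr 1; field_simp
  have hM : log (1 + y⁻¹) = 2 * log (x + 1 / 2) - log x - log (x + 1) := by
    rw [show 1 + y⁻¹ = (x + 1 / 2) ^ 2 / (x * (x + 1)) by rw [hy]; field_simp; ring,
      log_div (by positivity) (by positivity), log_pow, log_mul hx0.ne' (by positivity)]
    push_cast; ring
  have hupper := add_half_mul_log_one_add_inv_le hx0
  have hlower : 1 / (6 * x * (x + 1)) ≤ log (1 + y⁻¹) := by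
    have h := one_le_add_half_mul_log_one_add_inv hy0
    have hpos : 0 ≤ log (1 + y⁻¹) := log_nonneg (by simp [hy0.le])
    rw [div_le_iff₀ (by positivity)]
    nlinarith
  have : 1 / (12 * x * (x + 1)) = 1 / (6 * x * (x + 1)) / 2 := by field_simp; ring
  rw [hL] at hupper
  rw [hM] at hlower
  linarith

theorem add_one_pow_succ_le_exp_one_mul (a : ℕ) :
    ((a : ℝ) + 1) ^ (a + 1) ≤ exp 1 * (a + 1 / 2) * a ^ a := by
  rcases Nat.eq_zero_or_pos a with rfl | ha
  · norm_num; linarith [exp_one_gt_d9]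
  have ha' : (1 : ℝ) ≤ a := by exact_mod_cast ha
  rw [← log_le_log_iff (by positivity) (by positivity), log_mul (by positivity) (by positivity),
    log_mul (by positivity) (by positivity), log_exp, log_pow, log_pow]
  push_cast
  exact add_one_mul_log_add_one_le (by linarith)

theorem exp_one_mul_sqrt_mul_pow_le {n : ℕ} (hn : 0 < n) :
    exp 1 * (√n * n ^ n) ≤ √(n + 1) * (n + 1) ^ n := by
  have hn' : (0 : ℝ) < n := by exact_mod_cast hn
  have h := one_le_add_half_mul_log_one_add_inv hn'
  rw [show 1 + (n : ℝ)⁻¹ = (n + 1) / n by field_simp, log_div (by positivity) hn'.ne'] at h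
  rw [← log_le_log_iff (by positivity) (by positivity), log_mul (by positivity) (by positivity),
    log_mul (by positivity) (by positivity), log_mul (by positivity) (by positivity), log_exp,
    log_pow, log_pow, log_sqrt hn'.le, log_sqrt (by positivity)]
  linarith

theorem Real.pow_le_pow_mul_exp_sub {t : ℝ} (ht : 0 ≤ t) (k : ℕ) :
    t ^ k ≤ k ^ k * exp (t - k) := by
  rcases k.eq_zero_or_pos with rfl | hk
  · simpa using one_le_exp ht
  have hk' : (0 : ℝ) < k := by exact_mod_cast hk
  calc t ^ k = (t / k) ^ k * k ^ k := by rw [← mul_pow, div_mul_cancel₀ _ hk'.ne']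
    _ ≤ exp (t / k - 1) ^ k * k ^ k := by gcongr; linarith [add_one_le_exp (t / k - 1)]
    _ = k ^ k * exp (t - k) := by
      rw [← exp_nat_mul, mul_comm, mul_sub, mul_div_cancel₀ _ hk'.ne', mul_one]

theorem pow_mul_one_sub_pow_mul_le {θ : ℝ} (h0 : 0 ≤ θ) (h1 : θ ≤ 1) (a b : ℕ) :
    θ ^ a * (1 - θ) ^ b * ((a : ℝ) + b) ^ (a + b) ≤ (a : ℝ) ^ a * (b : ℝ) ^ b := by
  have ha := pow_le_pow_mul_exp_sub (t := (a + b) * θ) (by positivity) a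
  have h1' : 0 ≤ ((a : ℝ) + b) * (1 - θ) := mul_nonneg (by positivity) (sub_nonneg.2 h1)
  have hb := pow_le_pow_mul_exp_sub h1' b
  calc θ ^ a * (1 - θ) ^ b * ((a : ℝ) + b) ^ (a + b)
      = ((a + b) * θ) ^ a * ((a + b) * (1 - θ)) ^ b := by rw [mul_pow, mul_pow, pow_add]; ring
    _ ≤ (a ^ a * exp ((a + b) * θ - a)) * (b ^ b * exp ((a + b) * (1 - θ) - b)) :=
      mul_le_mul ha hb (pow_nonneg h1' b) (by positivity)
    _ = a ^ a * b ^ b := by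
      rw [mul_mul_mul_comm, ← exp_add,
        show (a + b) * θ - a + ((a + b) * (1 - θ) - b) = 0 by ring, exp_zero, mul_one]

namespace ProbabilityTheory

theorem beta_comm (u v : ℝ) : beta u v = beta v u := by
  rw [beta, beta, mul_comm, add_comm]

theorem beta_add_one_left {u v : ℝ} (hu : u ≠ 0) (huv : u + v ≠ 0) :
    beta (u + 1) v = beta u v * (u / (u + v)) := by
  rw [beta, beta, add_right_comm, Gamma_add_one hu, Gamma_add_one huv]
  simp only [div_eq_mul_inv, mul_inv]
  ring

theorem beta_one_half_one_half : beta (1 / 2) (1 / 2) = π := by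
  rw [beta, Gamma_one_half_eq, add_halves, Gamma_one, div_one, mul_self_sqrt pi_pos.le]

theorem integral_rpow_mul_one_sub_rpow_eq_beta {u v : ℝ} (hu : 0 < u) (hv : 0 < v) :
    ∫ x in (0 : ℝ)..1, x ^ (u - 1) * (1 - x) ^ (v - 1) = beta u v := by
  have h : Complex.betaIntegral u v =
      ↑(∫ x in (0 : ℝ)..1, x ^ (u - 1) * (1 - x) ^ (v - 1)) := by
    rw [Complex.betaIntegral, ← intervalIntegral.integral_ofReal]
    refine intervalIntegral.integral_congr fun x hx => ?_
    rw [Set.uIcc_of_le zero_le_one] at hx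
    push_cast [Complex.ofReal_cpow hx.1, Complex.ofReal_cpow (sub_nonneg.2 hx.2)]
    rfl
  rw [beta_eq_betaIntegralReal u v hu hv, h, Complex.ofReal_re]

end ProbabilityTheory

noncomputable def ktProb (a b : ℕ) : ℝ :=
  beta (a + 1 / 2) (b + 1 / 2) / π

theorem ktProb_pos (a b : ℕ) : 0 < ktProb a b :=
  div_pos (beta_pos (by positivity) (by positivity)) pi_pos

theorem ktProb_comm (a b : ℕ) : ktProb a b = ktProb b a := by
  rw [ktProb, ktProb, beta_comm]

theorem ktProb_zero_zero : ktProb 0 0 = 1 := by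
  rw [ktProb, Nat.cast_zero, zero_add, beta_one_half_one_half, div_self pi_ne_zero]

theorem ktProb_succ_left (a b : ℕ) :
    ktProb (a + 1) b = ktProb a b * ((a + 1 / 2) / (a + b + 1)) := by
  rw [ktProb, ktProb, Nat.cast_succ, add_right_comm (a : ℝ) 1,
    beta_add_one_left (by positivity) (by positivity)]
  ring_nf

theorem Real.pow_mul_rpow_neg_half {t : ℝ} (ht : 0 ≤ t) (k : ℕ) :
    t ^ k * t ^ (-(1 / 2) : ℝ) = t ^ ((k : ℝ) + 1 / 2 - 1) := by
  rw [← rpow_natCast, ← rpow_add' ht]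
  · ring_nf
  · intro h
    have : (2 * k : ℝ) = 1 := by linarith
    norm_cast at this
    omega

theorem ktXi_eq_ktProb (x : List Bool) : ktXi x = ktProb (x.count true) (x.count false) := by
  rw [ktXi, ktProb, ← integral_rpow_mul_one_sub_rpow_eq_beta (by positivity) (by positivity),
    ← intervalIntegral.integral_div]
  refine intervalIntegral.integral_congr fun θ hθ => ?_
  rw [Set.uIcc_of_le zero_le_one] at hθ
  rw [← pow_mul_rpow_neg_half hθ.1, ← pow_mul_rpow_neg_half (sub_nonneg.2 hθ.2)]
  ring

theorem succ_pow_mul_pow_le_ktProb_succ_left {a b n : ℕ} (hab : a + b = n) (hn : 0 < n)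
    (ih : (a : ℝ) ^ a * (b : ℝ) ^ b ≤ 2 * √n * n ^ n * ktProb a b) :
    ((a : ℝ) + 1) ^ (a + 1) * (b : ℝ) ^ b ≤
      2 * √(n + 1) * (n + 1) ^ (n + 1) * ktProb (a + 1) b := by
  have hP : ktProb (a + 1) b = ktProb a b * ((a + 1 / 2) / (n + 1)) := by
    rw [ktProb_succ_left, ← hab]; push_cast; ring
  have hP0 := (ktProb_pos a b).le
  calc ((a : ℝ) + 1) ^ (a + 1) * (b : ℝ) ^ b ≤ exp 1 * (a + 1 / 2) * a ^ a * b ^ b := by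
        gcongr; exact add_one_pow_succ_le_exp_one_mul a
    _ = (a + 1 / 2) * exp 1 * (a ^ a * b ^ b) := by ring
    _ ≤ (a + 1 / 2) * exp 1 * (2 * √n * n ^ n * ktProb a b) := by gcongr
    _ = 2 * (a + 1 / 2) * (exp 1 * (√n * n ^ n)) * ktProb a b := by ring
    _ ≤ 2 * (a + 1 / 2) * (√(n + 1) * (n + 1) ^ n) * ktProb a b := by
        gcongr 2 * (a + 1 / 2) * ?_ * _; exact exp_one_mul_sqrt_mul_pow_le hn
    _ = 2 * √(n + 1) * (n + 1) ^ (n + 1) * ktProb (a + 1) b := by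
        rw [hP, pow_succ]; field_simp

theorem pow_mul_pow_le_ktProb {n : ℕ} (hn : 1 ≤ n) {a b : ℕ} (hab : a + b = n) :
    (a : ℝ) ^ a * (b : ℝ) ^ b ≤ 2 * √n * n ^ n * ktProb a b := by
  induction n, hn using Nat.le_induction generalizing a b with
  | base =>
    obtain ⟨rfl, rfl⟩ | ⟨rfl, rfl⟩ : (a = 1 ∧ b = 0) ∨ (a = 0 ∧ b = 1) := by omega
    · simp [ktProb_succ_left, ktProb_zero_zero]
    · simp [ktProb_comm 0 1, ktProb_succ_left, ktProb_zero_zero]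
  | succ n hn ih =>
    have step {a b : ℕ} (hab : a + b = n) :
        ((a + 1 : ℕ) : ℝ) ^ (a + 1) * (b : ℝ) ^ b ≤
          2 * √(n + 1 : ℕ) * (n + 1 : ℕ) ^ (n + 1) * ktProb (a + 1) b := by
      push_cast
      exact succ_pow_mul_pow_le_ktProb_succ_left hab hn (ih hab)
    rcases a with _ | a
    · obtain ⟨b, rfl⟩ : ∃ b', b = b' + 1 := ⟨b - 1, by omega⟩
      rw [ktProb_comm, mul_comm]
      exact step (by omega : b + 0 = n)
    · exact step (by omega)

theorem pow_mul_one_sub_pow_div_ktXi_le (x : List Bool) (hx : 1 ≤ x.length) {θ : ℝ}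
    (h0 : 0 ≤ θ) (h1 : θ ≤ 1) :
    θ ^ (x.count true) * (1 - θ) ^ (x.count false) / ktXi x ≤ 2 * √x.length := by
  have hn := List.count_true_add_count_false x
  have hN : (0 : ℝ) < x.length := by exact_mod_cast hx
  have hML := pow_mul_one_sub_pow_mul_le h0 h1 (x.count true) (x.count false)
  have hKT := pow_mul_pow_le_ktProb hx hn
  rw [ktXi_eq_ktProb, div_le_iff₀ (ktProb_pos _ _)]
  rw [← Nat.cast_add, hn] at hML
  exact le_of_mul_le_mul_right ((hML.trans hKT).trans_eq (by ring)) (pow_pos hN _)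

theorem Real.logb_le_logb_of_nonneg {b x y : ℝ} (hb : 1 < b) (hx : 0 ≤ x) (hxy : x ≤ y)
    (hy : 1 ≤ y) : logb b x ≤ logb b y := by
  rcases hx.eq_or_lt with rfl | hx
  · rw [logb_zero]; exact logb_nonneg hb hy
  · exact logb_le_logb_of_le hb hx hxy

/-- KT parameter redundancy: for all `n ≥ 1`, binary sequences `x` of length `n`
with `a` zeroes and `b` ones, and all `θ ∈ [0,1]`,
`log₂(θ^b (1-θ)^a / ξ_KT(x)) ≤ (1/2)·log₂ n + 1`. -/
theorem kt_redundancy_bound (x : List Bool) (hx : 1 ≤ x.length)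
    (θ : ℝ) (hθ : θ ∈ Set.Icc (0:ℝ) 1) :
    Real.logb 2 (θ ^ (x.count true) * (1 - θ) ^ (x.count false) / ktXi x) ≤
      (1/2) * Real.logb 2 (x.length : ℝ) + 1 := by
  have hN : (1 : ℝ) ≤ x.length := by exact_mod_cast hx
  have hratio : 0 ≤ θ ^ (x.count true) * (1 - θ) ^ (x.count false) / ktXi x :=
    div_nonneg (mul_nonneg (pow_nonneg hθ.1 _) (pow_nonneg (sub_nonneg.2 hθ.2) _))
      (ktXi_eq_ktProb x ▸ (ktProb_pos _ _).le)
  calc logb 2 (θ ^ (x.count true) * (1 - θ) ^ (x.count false) / ktXi x)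
      ≤ logb 2 (2 * √x.length) :=
        logb_le_logb_of_nonneg one_lt_two hratio
          (pow_mul_one_sub_pow_div_ktXi_le x hx hθ.1 hθ.2) (by nlinarith [one_le_sqrt.2 hN])
    _ = 1 / 2 * logb 2 x.length + 1 := by
        rw [logb_mul two_ne_zero (by positivity), logb_self_eq_one one_lt_two, sqrt_eq_rpow,
          logb_rpow_eq_mul_logb_of_pos (by positivity)]
        ring
end
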